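/- There exist universal constants C > 1 and 0 < c < 1 such that the following holds: let n ≥ 2 be an integer, and let f: [0,∞) → [0,∞) be a continuous, log-concave function, C²-smooth on (0,∞), with 0 < ∫₀^∞ f < ∞. Then for all 0 ≤ ε ≤ 1, ∫_{t_n(f)(1−ε)}^{t_n(f)(1+ε)} t^{n−1} f(t) dt ≥ (1 − C e^{−c ε² n}) ∫₀^∞ t^{n−1} f(t) dt. -/

import Mathlib

/-!
Put `g(t) = t^{n-1} f(t)`, which is log-concave. The defining equation of `t₀ = t_n(f)` says
that the tangent line of `log f` at `t₀` has slope `-(n-1)/t₀`, hence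
`log g(t) - log g(t₀) ≤ (n-1) (log (t/t₀) - (t/t₀ - 1)) ≤ -(n-1) (t/t₀ - 1)² / 8` for
`t ≤ 2t₀`, so at `t₀(1 ± ε)` the function `g` has dropped below `δ g(t₀)`, `δ = e^{-nε²/16}`.
On either side of `t₀`, concavity of `log g` puts `g` below the exponential through `(t₀, g(t₀))`
and `(t₀(1 ± ε), g(t₀(1 ± ε)))` on the tail and above it in between; integrating the
exponential, the tail carries at most `δ / (1 - δ)` times the mass of the adjacent half of
`[t₀(1-ε), t₀(1+ε)]`. Summing up, `(1 - δ) ∫₀^∞ g ≤ ∫_{t₀(1-ε)}^{t₀(1+ε)} g`.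
-/

open MeasureTheory Real Set Filter
open scoped ENNReal NNReal

noncomputable section

/-- A function `f : [0,∞) → [0,∞)` is log-concave. -/
def LogConcaveOnNonneg (f : ℝ → ℝ) : Prop :=
  ∀ x : ℝ, 0 ≤ x → ∀ y : ℝ, 0 ≤ y → ∀ l : ℝ, 0 < l → l < 1 →
    f x ^ l * f y ^ (1 - l) ≤ f (l * x + (1 - l) * y)

/-- `t` is the point `t_p(f)`: the (unique) `t > 0` with `f(t) > 0` and
`f′(t)/f(t) = −(p−1)/t`. -/
def IsTp (p : ℝ) (f : ℝ → ℝ) (t : ℝ) : Prop :=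
  0 < t ∧ 0 < f t ∧ derivWithin f (Set.Ioi 0) t / f t = -(p - 1) / t

theorem log_one_add_le_sub_sq_div_eight {ε : ℝ} (h0 : 0 ≤ ε) (h1 : ε ≤ 1) :
    log (1 + ε) ≤ ε - ε ^ 2 / 8 := by
  have hy : 7 * ε / 8 ≤ ε - ε ^ 2 / 8 := by nlinarith
  rw [log_le_iff_le_exp (by linarith)]
  calc 1 + ε ≤ (1 + (ε - ε ^ 2 / 8) / 3) ^ 3 := by
        nlinarith [sq_nonneg (ε - ε ^ 2 / 8), pow_nonneg (by linarith : (0:ℝ) ≤ ε - ε ^ 2 / 8) 3]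
    _ ≤ exp ((ε - ε ^ 2 / 8) / 3) ^ 3 := by
        gcongr
        · nlinarith
        · linarith [add_one_le_exp ((ε - ε ^ 2 / 8) / 3)]
    _ = exp (ε - ε ^ 2 / 8) := by rw [← exp_nat_mul]; ring_nf

theorem log_one_sub_le_neg_sub_sq_div_four {ε : ℝ} (h0 : 0 ≤ ε) (h1 : ε < 1) :
    log (1 - ε) ≤ -ε - ε ^ 2 / 4 := by
  rw [log_le_iff_le_exp (by linarith)]
  calc 1 - ε ≤ (1 - (ε + ε ^ 2 / 4) / 2) ^ 2 := by nlinarith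
    _ ≤ exp (-((ε + ε ^ 2 / 4) / 2)) ^ 2 := by
        gcongr
        · nlinarith
        · linarith [add_one_le_exp (-((ε + ε ^ 2 / 4) / 2))]
    _ = exp (-ε - ε ^ 2 / 4) := by rw [← exp_nat_mul]; ring_nf

theorem log_le_sub_one_sub_sq_div_eight {u : ℝ} (hu : 0 < u) (hu2 : u ≤ 2) :
    log u ≤ u - 1 - (u - 1) ^ 2 / 8 := by
  rcases le_total 1 u with h | h
  · simpa using log_one_add_le_sub_sq_div_eight (ε := u - 1) (by linarith) (by linarith)
  · have := log_one_sub_le_neg_sub_sq_div_four (ε := 1 - u) (by linarith) (by linarith)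
    simp only [sub_sub_cancel] at this
    nlinarith

theorem pow_mul_exp_le_exp (k : ℕ) {u : ℝ} (hu : 0 ≤ u) (hu2 : u ≤ 2) :
    u ^ k * exp (-(k * (u - 1))) ≤ exp (-(k * (u - 1) ^ 2 / 8)) := by
  rcases hu.eq_or_lt with rfl | hu
  · rcases eq_or_ne k 0 with rfl | hk
    · simp
    · rw [zero_pow hk, zero_mul]
      positivity
  rw [← exp_log (pow_pos hu k), log_pow, ← exp_add, exp_le_exp]
  nlinarith [mul_le_mul_of_nonneg_left (log_le_sub_one_sub_sq_div_eight hu hu2) k.cast_nonneg]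

namespace ConcaveOn

variable {s : Set ℝ} {H : ℝ → ℝ} {x y z : ℝ}

theorem le_add_mul_sub_of_hasDerivAt {H' : ℝ}
    (hH : ConcaveOn ℝ s H) (hx : x ∈ s) (hy : y ∈ s) (hd : HasDerivAt H H' x) :
    H y ≤ H x + H' * (y - x) := by
  rcases lt_trichotomy y x with hyx | rfl | hxy
  · have := hH.le_slope_of_hasDerivAt hy hx hyx hd
    rw [slope_def_field, le_div_iff₀ (sub_pos.2 hyx)] at this
    linarith
  · simp
  · have := hH.slope_le_of_hasDerivAt hx hy hxy hd
    rw [slope_def_field, div_le_iff₀ (sub_pos.2 hxy)] at this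
    linarith

theorem secant_anti (hH : ConcaveOn ℝ s H) (hx : x ∈ s) (hy : y ∈ s) (hz : z ∈ s)
    (hyx : y ≠ x) (hzx : z ≠ x) (hyz : y ≤ z) : slope H x z ≤ slope H x y := by
  have := hH.neg.secant_mono hx hy hz hyx hzx hyz
  simp only [Pi.neg_apply, neg_sub_neg] at this
  rw [slope_def_field, slope_def_field, ← neg_sub (H x), ← neg_sub (H x), neg_div, neg_div]
  exact neg_le_neg this

theorem le_add_slope_mul_sub (hH : ConcaveOn ℝ s H) (hx : x ∈ s) (hy : y ∈ s) (hz : z ∈ s)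
    (h : x < y ∧ y ≤ z ∨ z ≤ y ∧ y < x) : H z ≤ H x + slope H x y * (z - x) := by
  have hz_eq := sub_smul_slope H x z
  rw [smul_eq_mul, vsub_eq_sub] at hz_eq
  rcases h with ⟨hxy, hyz⟩ | ⟨hzy, hyx⟩
  · have := hH.secant_anti hx hy hz hxy.ne' (hxy.trans_le hyz).ne' hyz
    nlinarith [mul_le_mul_of_nonneg_right this (by linarith : 0 ≤ z - x)]
  · have := hH.secant_anti hx hz hy (hzy.trans_lt hyx).ne hyx.ne hzy
    nlinarith [mul_le_mul_of_nonpos_right this (by linarith : z - x ≤ 0)]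

theorem add_slope_mul_sub_le (hH : ConcaveOn ℝ s H) (hx : x ∈ s) (hy : y ∈ s) (hz : z ∈ s)
    (h : x < z ∧ z ≤ y ∨ y ≤ z ∧ z < x) : H x + slope H x y * (z - x) ≤ H z := by
  have hz_eq := sub_smul_slope H x z
  rw [smul_eq_mul, vsub_eq_sub] at hz_eq
  rcases h with ⟨hxz, hzy⟩ | ⟨hyz, hzx⟩
  · have := hH.secant_anti hx hz hy hxz.ne' (hxz.trans_le hzy).ne' hzy
    nlinarith [mul_le_mul_of_nonneg_right this (by linarith : 0 ≤ z - x)]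
  · have := hH.secant_anti hx hy hz (hyz.trans_lt hzx).ne hzx.ne hyz
    nlinarith [mul_le_mul_of_nonpos_right this (by linarith : z - x ≤ 0)]

end ConcaveOn

theorem integral_exp_mul_sub {κ : ℝ} (hκ : κ ≠ 0) (t₀ a b : ℝ) :
    ∫ t in a..b, exp (κ * (t - t₀)) = (exp (κ * (b - t₀)) - exp (κ * (a - t₀))) / κ := by
  have hderiv (t : ℝ) : HasDerivAt (fun s => exp (κ * (s - t₀)) / κ) (exp (κ * (t - t₀))) t := by
    have := (((hasDerivAt_id t).sub_const t₀).const_mul κ).exp.div_const κ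
    exact this.congr_deriv (by simp [hκ])
  rw [intervalIntegral.integral_eq_sub_of_hasDerivAt (fun t _ => hderiv t)
    ((by fun_prop : Continuous fun t => exp (κ * (t - t₀))).intervalIntegrable _ _), sub_div]

theorem integral_Ioi_exp_mul_sub {κ : ℝ} (hκ : κ < 0) (t₀ T : ℝ) :
    ∫ t in Ioi T, exp (κ * (t - t₀)) = -exp (κ * (T - t₀)) / κ := by
  simp_rw [mul_sub, exp_sub]
  rw [integral_div, integral_exp_mul_Ioi hκ]
  ring

theorem integrableOn_Ioi_exp_mul_sub {κ : ℝ} (hκ : κ < 0) (t₀ T : ℝ) :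
    IntegrableOn (fun t => exp (κ * (t - t₀))) (Ioi T) := by
  simp_rw [mul_sub, exp_sub]
  exact (integrableOn_exp_mul_Ioi hκ T).div_const _

theorem mul_integral_Ioi_le_of_exp_bounds {g : ℝ → ℝ} {t₀ T κ A : ℝ} (hκ : κ < 0) (hT : t₀ ≤ T)
    (hint : IntegrableOn g (Ioi t₀)) (hup : ∀ t ∈ Ioi T, g t ≤ A * exp (κ * (t - t₀)))
    (hlow : ∀ t ∈ Ioo t₀ T, A * exp (κ * (t - t₀)) ≤ g t) :
    (1 - exp (κ * (T - t₀))) * ∫ t in Ioi T, g t ≤ exp (κ * (T - t₀)) * ∫ t in t₀..T, g t := by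
  set q := exp (κ * (T - t₀))
  have htail : ∫ t in Ioi T, g t ≤ A * (-q / κ) := by
    refine (setIntegral_mono_on (hint.mono_set (Ioi_subset_Ioi hT))
      ((integrableOn_Ioi_exp_mul_sub hκ t₀ T).const_mul A) measurableSet_Ioi hup).trans_eq ?_
    rw [integral_const_mul, integral_Ioi_exp_mul_sub hκ]
  have hmid : A * ((q - 1) / κ) ≤ ∫ t in t₀..T, g t := by
    have := intervalIntegral.integral_mono_on_of_le_Ioo hT
      ((by fun_prop : Continuous fun t => A * exp (κ * (t - t₀))).intervalIntegrable _ _)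
      ((intervalIntegrable_iff_integrableOn_Ioc_of_le hT).2 (hint.mono_set Ioc_subset_Ioi_self))
      hlow
    rwa [intervalIntegral.integral_const_mul, integral_exp_mul_sub hκ.ne, sub_self, mul_zero,
      exp_zero] at this
  have hq : q ≤ 1 := exp_le_one_iff.2 (mul_nonpos_of_nonpos_of_nonneg hκ.le (sub_nonneg.2 hT))
  calc (1 - q) * ∫ t in Ioi T, g t ≤ (1 - q) * (A * (-q / κ)) := by gcongr
    _ = q * (A * ((q - 1) / κ)) := by ring
    _ ≤ q * ∫ t in t₀..T, g t := by gcongr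

theorem mul_integral_le_of_exp_bounds_left {g : ℝ → ℝ} {b a t₀ κ A : ℝ} (hκ : 0 < κ) (hA : 0 ≤ A)
    (hba : b ≤ a) (ha : a ≤ t₀) (hint : IntegrableOn g (Ioi b))
    (hup : ∀ t ∈ Ioo b a, g t ≤ A * exp (κ * (t - t₀)))
    (hlow : ∀ t ∈ Ioo a t₀, A * exp (κ * (t - t₀)) ≤ g t) :
    (1 - exp (κ * (a - t₀))) * ∫ t in b..a, g t ≤ exp (κ * (a - t₀)) * ∫ t in a..t₀, g t := by
  set q := exp (κ * (a - t₀))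
  have hprofile : Continuous fun t => A * exp (κ * (t - t₀)) := by fun_prop
  have htail : ∫ t in b..a, g t ≤ A * (q / κ) := by
    have := intervalIntegral.integral_mono_on_of_le_Ioo hba
      ((intervalIntegrable_iff_integrableOn_Ioc_of_le hba).2 (hint.mono_set Ioc_subset_Ioi_self))
      (hprofile.intervalIntegrable _ _) hup
    rw [intervalIntegral.integral_const_mul, integral_exp_mul_sub hκ.ne'] at this
    refine this.trans (mul_le_mul_of_nonneg_left ?_ hA)
    gcongr
    linarith [exp_pos (κ * (b - t₀))]
  have hmid : A * ((1 - q) / κ) ≤ ∫ t in a..t₀, g t := by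
    have := intervalIntegral.integral_mono_on_of_le_Ioo ha (hprofile.intervalIntegrable _ _)
      ((intervalIntegrable_iff_integrableOn_Ioc_of_le ha).2
        (hint.mono_set (Ioc_subset_Ioi_self.trans (Ioi_subset_Ioi hba)))) hlow
    rwa [intervalIntegral.integral_const_mul, integral_exp_mul_sub hκ.ne', sub_self, mul_zero,
      exp_zero] at this
  have hq : q ≤ 1 := exp_le_one_iff.2 (mul_nonpos_of_nonneg_of_nonpos hκ.le (sub_nonpos.2 ha))
  calc (1 - q) * ∫ t in b..a, g t ≤ (1 - q) * (A * (q / κ)) := by gcongr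
    _ = q * (A * ((1 - q) / κ)) := by ring
    _ ≤ q * ∫ t in a..t₀, g t := by gcongr

theorem exp_slope_log_mul_sub {g : ℝ → ℝ} {x y : ℝ} (hgx : 0 < g x) (hgy : 0 < g y) :
    exp (slope (fun t => log (g t)) x y * (y - x)) = g y / g x := by
  have := sub_smul_slope (fun t => log (g t)) x y
  rw [smul_eq_mul, vsub_eq_sub] at this
  rw [mul_comm, this, exp_sub, exp_log hgx, exp_log hgy]

theorem logConcaveOnNonneg_pow (k : ℕ) : LogConcaveOnNonneg fun t => t ^ k := by
  intro x hx y hy l hl0 hl1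
  have hamgm := geom_mean_le_arith_mean2_weighted hl0.le (sub_nonneg.2 hl1.le) hx hy
    (add_sub_cancel l 1)
  calc (x ^ k) ^ l * (y ^ k) ^ (1 - l) = (x ^ l * y ^ (1 - l)) ^ k := by
        rw [mul_pow, rpow_pow_comm hx, rpow_pow_comm hy]
    _ ≤ (l * x + (1 - l) * y) ^ k := by gcongr

namespace LogConcaveOnNonneg

variable {f g : ℝ → ℝ} {x y z a t₀ T δ : ℝ}

theorem mul (hf : LogConcaveOnNonneg f) (hg : LogConcaveOnNonneg g)
    (hf0 : ∀ t, 0 ≤ t → 0 ≤ f t) (hg0 : ∀ t, 0 ≤ t → 0 ≤ g t) :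
    LogConcaveOnNonneg fun t => f t * g t := by
  intro x hx y hy l hl0 hl1
  rw [mul_rpow (hf0 x hx) (hg0 x hx), mul_rpow (hf0 y hy) (hg0 y hy),
    mul_mul_mul_comm]
  have hz : 0 ≤ l * x + (1 - l) * y := by have := sub_pos.2 hl1; positivity
  exact mul_le_mul (hf x hx y hy l hl0 hl1) (hg x hx y hy l hl0 hl1)
    (mul_nonneg (rpow_nonneg (hg0 x hx) _) (rpow_nonneg (hg0 y hy) _)) (hf0 _ hz)

theorem concaveOn_log (hf : LogConcaveOnNonneg f) :
    ConcaveOn ℝ {t | 0 ≤ t ∧ 0 < f t} fun t => log (f t) := by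
  have key : ∀ ⦃x⦄, x ∈ {t | 0 ≤ t ∧ 0 < f t} → ∀ ⦃y⦄, y ∈ {t | 0 ≤ t ∧ 0 < f t} →
      ∀ ⦃a b : ℝ⦄, 0 < a → 0 < b → a + b = 1 →
        0 < f x ^ a * f y ^ b ∧ f x ^ a * f y ^ b ≤ f (a • x + b • y) := by
    rintro x ⟨hx, hfx⟩ y ⟨hy, hfy⟩ a b ha hb hab
    obtain rfl : b = 1 - a := by linarith
    exact ⟨by positivity, hf x hx y hy a ha (by linarith)⟩
  refine concaveOn_iff_forall_pos.2 ⟨convex_iff_forall_pos.2 ?_, ?_⟩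
  · intro x hx y hy a b ha hb hab
    have := key hx hy ha hb hab
    exact ⟨add_nonneg (smul_nonneg ha.le hx.1) (smul_nonneg hb.le hy.1), this.1.trans_le this.2⟩
  · intro x hx y hy a b ha hb hab
    have := key hx hy ha hb hab
    rw [smul_eq_mul, smul_eq_mul, ← log_rpow hx.2, ← log_rpow hy.2,
      ← log_mul (rpow_pos_of_pos hx.2 a).ne' (rpow_pos_of_pos hy.2 b).ne']
    exact log_le_log this.1 this.2

theorem pos_of_mem_uIcc (hg : LogConcaveOnNonneg g) (hx : 0 ≤ x) (hgx : 0 < g x) (hz : 0 ≤ z)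
    (hgz : 0 < g z) (hy : y ∈ uIcc x z) : 0 < g y :=
  (hg.concaveOn_log.1.ordConnected.uIcc_subset ⟨hx, hgx⟩ ⟨hz, hgz⟩ hy).2

theorem le_mul_exp_slope (hg : LogConcaveOnNonneg g) (hg0 : ∀ t, 0 ≤ t → 0 ≤ g t)
    (hx : 0 ≤ x) (hgx : 0 < g x) (hy : 0 ≤ y) (hgy : 0 < g y) (hz : 0 ≤ z)
    (h : x < y ∧ y ≤ z ∨ z ≤ y ∧ y < x) :
    g z ≤ g x * exp (slope (fun t => log (g t)) x y * (z - x)) := by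
  rcases (hg0 z hz).eq_or_lt with hgz | hgz
  · rw [← hgz]; positivity
  have := hg.concaveOn_log.le_add_slope_mul_sub ⟨hx, hgx⟩ ⟨hy, hgy⟩ ⟨hz, hgz⟩ h
  calc g z = exp (log (g z)) := (exp_log hgz).symm
    _ ≤ _ := exp_le_exp.2 this
    _ = _ := by rw [exp_add, exp_log hgx]

theorem mul_exp_slope_le (hg : LogConcaveOnNonneg g)
    (hx : 0 ≤ x) (hgx : 0 < g x) (hy : 0 ≤ y) (hgy : 0 < g y)
    (h : x < z ∧ z ≤ y ∨ y ≤ z ∧ z < x) :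
    g x * exp (slope (fun t => log (g t)) x y * (z - x)) ≤ g z := by
  have hgz : 0 < g z := hg.pos_of_mem_uIcc hx hgx hy hgy <| by
    rcases h with ⟨h₁, h₂⟩ | ⟨h₁, h₂⟩
    exacts [Icc_subset_uIcc ⟨h₁.le, h₂⟩, Icc_subset_uIcc' ⟨h₁, h₂.le⟩]
  have hz : 0 ≤ z := by rcases h with ⟨h₁, _⟩ | ⟨h₁, _⟩ <;> linarith
  have := hg.concaveOn_log.add_slope_mul_sub_le ⟨hx, hgx⟩ ⟨hy, hgy⟩ ⟨hz, hgz⟩ h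
  calc _ = exp (log (g x) + slope (fun t => log (g t)) x y * (z - x)) := by
        rw [exp_add, exp_log hgx]
    _ ≤ exp (log (g z)) := exp_le_exp.2 this
    _ = g z := exp_log hgz

theorem one_sub_mul_integral_Ioi_le (hg : LogConcaveOnNonneg g) (hg0 : ∀ t, 0 ≤ t → 0 ≤ g t)
    (ht₀ : 0 ≤ t₀) (hgt₀ : 0 < g t₀) (hT : t₀ ≤ T) (hint : IntegrableOn g (Ioi t₀))
    (hδ : 0 ≤ δ) (hgT : g T ≤ δ * g t₀) :
    (1 - δ) * ∫ t in Ioi T, g t ≤ δ * ∫ t in t₀..T, g t := by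
  have htail : 0 ≤ ∫ t in Ioi T, g t :=
    setIntegral_nonneg measurableSet_Ioi fun t (ht : T < t) => hg0 t (by linarith)
  have hmid : 0 ≤ ∫ t in t₀..T, g t :=
    intervalIntegral.integral_nonneg hT fun t ht => hg0 t (ht₀.trans ht.1)
  rcases le_or_gt 1 δ with hδ1 | hδ1
  · nlinarith
  rcases (hg0 T (ht₀.trans hT)).eq_or_lt with hgT0 | hgTpos
  · have hzero : ∫ t in Ioi T, g t = 0 := by
      refine setIntegral_eq_zero_of_forall_eq_zero fun t (ht : T < t) => ?_
      by_contra hgt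
      have := hg.pos_of_mem_uIcc ht₀ hgt₀ (by linarith) ((hg0 t (by linarith)).lt_of_ne' hgt)
        (Icc_subset_uIcc ⟨hT, ht.le⟩)
      exact this.ne' hgT0.symm
    rw [hzero, mul_zero]
    exact mul_nonneg hδ hmid
  have htT : t₀ < T := hT.lt_of_ne (by rintro rfl; nlinarith)
  have hq := exp_slope_log_mul_sub hgt₀ hgTpos
  have hκ : slope (fun t => log (g t)) t₀ T < 0 := by
    refine neg_of_mul_neg_left ?_ (sub_pos.2 htT).le
    rw [← exp_lt_one_iff, hq, div_lt_one hgt₀]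
    nlinarith
  have := mul_integral_Ioi_le_of_exp_bounds hκ hT hint
    (fun t (ht : T < t) => hg.le_mul_exp_slope hg0 ht₀ hgt₀ (ht₀.trans hT) hgTpos
      (by linarith) (.inl ⟨htT, ht.le⟩))
    (fun t ht => hg.mul_exp_slope_le ht₀ hgt₀ (ht₀.trans hT) hgTpos (.inl ⟨ht.1, ht.2.le⟩))
  rw [hq] at this
  have hqδ : g T / g t₀ ≤ δ := (div_le_iff₀ hgt₀).2 hgT
  nlinarith

theorem one_sub_mul_integral_zero_le (hg : LogConcaveOnNonneg g) (hg0 : ∀ t, 0 ≤ t → 0 ≤ g t)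
    (ha : 0 ≤ a) (hat₀ : a ≤ t₀) (hgt₀ : 0 < g t₀) (hint : IntegrableOn g (Ioi 0))
    (hδ : 0 ≤ δ) (hga : g a ≤ δ * g t₀) :
    (1 - δ) * ∫ t in 0..a, g t ≤ δ * ∫ t in a..t₀, g t := by
  have htail : 0 ≤ ∫ t in 0..a, g t :=
    intervalIntegral.integral_nonneg ha fun t ht => hg0 t ht.1
  have hmid : 0 ≤ ∫ t in a..t₀, g t :=
    intervalIntegral.integral_nonneg hat₀ fun t ht => hg0 t (ha.trans ht.1)
  rcases le_or_gt 1 δ with hδ1 | hδ1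
  · nlinarith
  rcases (hg0 a ha).eq_or_lt with hga0 | hgapos
  · have hzero : ∫ t in 0..a, g t = 0 := by
      refine intervalIntegral.integral_zero_ae (.of_forall fun t ht => ?_)
      rw [uIoc_of_le ha] at ht
      by_contra hgt
      have := hg.pos_of_mem_uIcc ht.1.le ((hg0 t ht.1.le).lt_of_ne' hgt) (ha.trans hat₀) hgt₀
        (Icc_subset_uIcc ⟨ht.2, hat₀⟩)
      exact this.ne' hga0.symm
    rw [hzero, mul_zero]
    exact mul_nonneg hδ hmid
  have hat₀' : a < t₀ := hat₀.lt_of_ne (by rintro rfl; nlinarith)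
  have hq := exp_slope_log_mul_sub hgt₀ hgapos
  have hκ : 0 < slope (fun t => log (g t)) t₀ a := by
    refine pos_of_mul_neg_left ?_ (sub_neg.2 hat₀').le
    rw [← exp_lt_one_iff, hq, div_lt_one hgt₀]
    nlinarith
  have := mul_integral_le_of_exp_bounds_left hκ hgt₀.le ha hat₀ hint
    (fun t ht => hg.le_mul_exp_slope hg0 (ha.trans hat₀) hgt₀ ha hgapos ht.1.le
      (.inr ⟨ht.2.le, hat₀'⟩))
    (fun t ht => hg.mul_exp_slope_le (ha.trans hat₀) hgt₀ ha hgapos (.inr ⟨ht.1.le, ht.2⟩))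
  rw [hq] at this
  have hqδ : g a / g t₀ ≤ δ := (div_le_iff₀ hgt₀).2 hga
  nlinarith

theorem one_sub_mul_integral_Ioi_le_integral_Icc (hg : LogConcaveOnNonneg g)
    (hg0 : ∀ t, 0 ≤ t → 0 ≤ g t) (hint : IntegrableOn g (Ioi 0)) (ha : 0 ≤ a) (hat₀ : a ≤ t₀)
    (hT : t₀ ≤ T) (hgt₀ : 0 < g t₀) (hδ : 0 ≤ δ) (hga : g a ≤ δ * g t₀) (hgT : g T ≤ δ * g t₀) :
    (1 - δ) * ∫ t in Ioi 0, g t ≤ ∫ t in Icc a T, g t := by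
  have ht₀ : 0 ≤ t₀ := ha.trans hat₀
  have hint' {b : ℝ} (hb : 0 ≤ b) : IntegrableOn g (Ioi b) := hint.mono_set (Ioi_subset_Ioi hb)
  have hleft := hg.one_sub_mul_integral_zero_le hg0 ha hat₀ hgt₀ hint hδ hga
  have hright := hg.one_sub_mul_integral_Ioi_le hg0 ht₀ hgt₀ hT (hint' ht₀) hδ hgT
  have hsplit : ∫ t in Ioi 0, g t =
      (∫ t in 0..a, g t) + (∫ t in a..t₀, g t) + (∫ t in t₀..T, g t) + ∫ t in Ioi T, g t := by
    rw [← intervalIntegral.integral_interval_add_Ioi hint (hint' ha),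
      ← intervalIntegral.integral_interval_add_Ioi (hint' ha) (hint' ht₀),
      ← intervalIntegral.integral_interval_add_Ioi (hint' ht₀) (hint' (ht₀.trans hT))]
    ring
  have hmid : ∫ t in Icc a T, g t = (∫ t in a..t₀, g t) + ∫ t in t₀..T, g t := by
    have hii {b c : ℝ} (hb : 0 ≤ b) (hbc : b ≤ c) : IntervalIntegrable g volume b c :=
      (intervalIntegrable_iff_integrableOn_Ioc_of_le hbc).2
        ((hint' hb).mono_set Ioc_subset_Ioi_self)
    rw [integral_Icc_eq_integral_Ioc, ← intervalIntegral.integral_of_le (hat₀.trans hT),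
      intervalIntegral.integral_add_adjacent_intervals (hii ha hat₀) (hii ht₀ hT)]
  rw [hsplit, hmid]
  linarith

end LogConcaveOnNonneg

namespace IsTp

variable {k : ℕ} {f : ℝ → ℝ} {t₀ : ℝ}

theorem le_mul_exp {p t : ℝ} (ht₀ : IsTp p f t₀)
    (hf : LogConcaveOnNonneg f) (hf0 : ∀ t, 0 ≤ t → 0 ≤ f t) (hd : DifferentiableAt ℝ f t₀)
    (ht : 0 ≤ t) : f t ≤ f t₀ * exp (-(p - 1) * (t - t₀) / t₀) := by
  obtain ⟨ht₀, hft₀, hderiv⟩ := ht₀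
  rcases (hf0 t ht).eq_or_lt with hft | hft
  · rw [← hft]; positivity
  have hlog : HasDerivAt (fun s => log (f s)) (-(p - 1) / t₀) t₀ := by
    rw [derivWithin_of_isOpen isOpen_Ioi ht₀] at hderiv
    exact hderiv ▸ hd.hasDerivAt.log hft₀.ne'
  have := hf.concaveOn_log.le_add_mul_sub_of_hasDerivAt ⟨ht₀.le, hft₀⟩ ⟨ht, hft⟩ hlog
  calc f t = exp (log (f t)) := (exp_log hft).symm
    _ ≤ exp (log (f t₀) + -(p - 1) / t₀ * (t - t₀)) := exp_le_exp.2 this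
    _ = f t₀ * exp (-(p - 1) * (t - t₀) / t₀) := by rw [exp_add, exp_log hft₀]; ring_nf

theorem pow_mul_le (ht₀ : IsTp (k + 1) f t₀) (hf : LogConcaveOnNonneg f)
    (hf0 : ∀ t, 0 ≤ t → 0 ≤ f t) (hd : DifferentiableAt ℝ f t₀) {t : ℝ} (ht : 0 ≤ t)
    (ht2 : t ≤ 2 * t₀) : t ^ k * f t ≤ exp (-(k * (t / t₀ - 1) ^ 2 / 8)) * (t₀ ^ k * f t₀) := by
  have ht₀pos := ht₀.1
  have hexp : -((k + 1 : ℝ) - 1) * (t - t₀) / t₀ = -(k * (t / t₀ - 1)) := by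
    field_simp
    ring
  calc t ^ k * f t ≤ t ^ k * (f t₀ * exp (-((k + 1 : ℝ) - 1) * (t - t₀) / t₀)) :=
        mul_le_mul_of_nonneg_left (ht₀.le_mul_exp hf hf0 hd ht) (pow_nonneg ht k)
    _ = ((t / t₀) ^ k * exp (-(k * (t / t₀ - 1)))) * (t₀ ^ k * f t₀) := by
        rw [hexp, div_pow]
        field_simp
    _ ≤ exp (-(k * (t / t₀ - 1) ^ 2 / 8)) * (t₀ ^ k * f t₀) := by
        gcongr
        · exact (mul_pos (pow_pos ht₀pos k) ht₀.2.1).le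
        · exact pow_mul_exp_le_exp k (div_nonneg ht ht₀pos.le) ((div_le_iff₀ ht₀pos).2 ht2)

theorem integrableOn_pow_mul (ht₀ : IsTp (k + 1) f t₀) (hk : k ≠ 0) (hf : LogConcaveOnNonneg f)
    (hf0 : ∀ t, 0 ≤ t → 0 ≤ f t) (hd : DifferentiableAt ℝ f t₀) (hcont : ContinuousOn f (Ici 0)) :
    IntegrableOn (fun t => t ^ k * f t) (Ioi 0) := by
  have ht₀pos := ht₀.1
  have hbound := integrableOn_rpow_mul_exp_neg_mul_rpow (s := k) (p := 1) (b := k / t₀)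
    (by linarith [k.cast_nonneg (α := ℝ)]) one_pos (by positivity)
  refine Integrable.mono' (hbound.const_mul (f t₀ * exp k))
    ((((continuous_pow k).continuousOn.mul hcont).mono Ioi_subset_Ici_self).aestronglyMeasurable
      measurableSet_Ioi) ?_
  filter_upwards [self_mem_ae_restrict measurableSet_Ioi] with t ht
  rw [norm_of_nonneg (mul_nonneg (pow_nonneg ht.le k) (hf0 t ht.le)), rpow_natCast, rpow_one]
  calc t ^ k * f t ≤ t ^ k * (f t₀ * exp (-((k + 1 : ℝ) - 1) * (t - t₀) / t₀)) :=
        mul_le_mul_of_nonneg_left (ht₀.le_mul_exp hf hf0 hd ht.le) (pow_nonneg ht.le k)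
    _ = f t₀ * exp k * (t ^ k * exp (-(k / t₀) * t)) := by
        rw [mul_mul_mul_comm, ← exp_add]
        field_simp
        ring_nf

end IsTp

/-- Klartag, Lemma 4.5 (Laplace method): for a continuous log-concave `f` on `[0,∞)`,
`C²`-smooth on `(0,∞)`, with `0 < ∫₀^∞ f < ∞`, the mass of `t^{n−1} f(t)` concentrates in
the interval `[t_n(f)(1−ε), t_n(f)(1+ε)]`. -/
theorem laplace_concentration_around_tn :
    ∃ C c : ℝ, 1 < C ∧ 0 < c ∧ c < 1 ∧
      ∀ (n : ℕ), 2 ≤ n →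
        ∀ f : ℝ → ℝ,
          (∀ t : ℝ, 0 ≤ t → 0 ≤ f t) →
          ContinuousOn f (Set.Ici 0) →
          ContDiffOn ℝ 2 f (Set.Ioi 0) →
          LogConcaveOnNonneg f →
          IntegrableOn f (Set.Ioi 0) →
          0 < ∫ t in Set.Ioi (0 : ℝ), f t →
          ∀ t₀ : ℝ, IsTp n f t₀ →
            ∀ ε : ℝ, 0 ≤ ε → ε ≤ 1 →
              (1 - C * Real.exp (-(c * ε ^ 2 * n))) * ∫ t in Set.Ioi (0 : ℝ), t ^ (n - 1) * f t ≤
                ∫ t in Set.Icc (t₀ * (1 - ε)) (t₀ * (1 + ε)), t ^ (n - 1) * f t := by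
  -- the argument gives `C = 1`, but the statement asks for `C > 1`
  refine ⟨2, 1 / 16, by norm_num, by norm_num, by norm_num, ?_⟩
  intro n hn f hf0 hcont hC2 hlc _ _ t₀ ht₀ ε hε0 hε1
  obtain ⟨k, rfl⟩ : ∃ k, n = k + 1 := ⟨n - 1, by omega⟩
  push_cast at ht₀ ⊢
  have hk : (1 : ℝ) ≤ k := by exact_mod_cast (by omega : 1 ≤ k)
  have ht₀pos := ht₀.1
  have hd : DifferentiableAt ℝ f t₀ :=
    (hC2.differentiableOn (by norm_num)).differentiableAt (Ioi_mem_nhds ht₀pos)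
  have hg := (logConcaveOnNonneg_pow k).mul hlc (fun t ht => pow_nonneg ht k) hf0
  have hg0 (t : ℝ) (ht : 0 ≤ t) : 0 ≤ t ^ k * f t := mul_nonneg (pow_nonneg ht k) (hf0 t ht)
  have hgt₀ : 0 < t₀ ^ k * f t₀ := mul_pos (pow_pos ht₀pos k) ht₀.2.1
  set δ := exp (-(1 / 16 * ε ^ 2 * (k + 1)))
  have hdrop (s : ℝ) (hs : s ^ 2 = ε ^ 2) :
      (t₀ * (1 + s)) ^ k * f (t₀ * (1 + s)) ≤ δ * (t₀ ^ k * f t₀) := by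
    have hs' := abs_le.1 ((sq_le_one_iff_abs_le_one s).1 (by nlinarith))
    refine (ht₀.pow_mul_le hlc hf0 hd (by nlinarith) (by nlinarith)).trans
      (mul_le_mul_of_nonneg_right (exp_le_exp.2 ?_) hgt₀.le)
    rw [mul_div_cancel_left₀ _ ht₀pos.ne', add_sub_cancel_left]
    nlinarith
  calc (1 - 2 * δ) * ∫ t in Ioi 0, t ^ k * f t ≤ (1 - δ) * ∫ t in Ioi 0, t ^ k * f t := by
        gcongr
        · exact setIntegral_nonneg measurableSet_Ioi fun t ht => hg0 t (le_of_lt ht)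
        · linarith [exp_pos (-(1 / 16 * ε ^ 2 * (k + 1)))]
    _ ≤ ∫ t in Icc (t₀ * (1 - ε)) (t₀ * (1 + ε)), t ^ k * f t :=
        hg.one_sub_mul_integral_Ioi_le_integral_Icc hg0
          (ht₀.integrableOn_pow_mul (by omega) hlc hf0 hd hcont) (by nlinarith) (by nlinarith)
          (by nlinarith) hgt₀ (exp_pos _).le
          (by simpa [sub_eq_add_neg] using hdrop (-ε) (neg_sq ε)) (hdrop ε rfl)
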